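/- Let α, σ > 0, set γ = (1/2)√(2σ² + α²) and ψ(x) = -α/σ² + (2γ/σ²) · (sinh(γx) + (α/(2γ))cosh(γx)) / (cosh(γx) + (α/(2γ))sinh(γx)). Then ψ(0) = 0, ψ'(0) = 1, and ψ satisfies the Riccati equation ψ'(x) = 1 - αψ(x) - (σ²/2)ψ(x)² for all x ≥ 0. -/

import Mathlib

/-!
Put `k = α / (2γ)` and `D x = cosh (γx) + k sinh (γx)`. Since `4γ² = 2σ² + α²`, the closed form
collapses to `ψ x = sinh (γx) / (γ D x)`, and `|k| < 1` keeps `D` positive. The quotient rule and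
`cosh² - sinh² = 1` give `ψ' = 1 / D²`, and the same identity shows `1 - αψ - (σ²/2)ψ² = 1 / D²`.
-/

open Real

namespace CIR

noncomputable def riccatiDenom (γ k x : ℝ) : ℝ := cosh (γ * x) + k * sinh (γ * x)

noncomputable def riccatiSol (γ k x : ℝ) : ℝ := sinh (γ * x) / (γ * riccatiDenom γ k x)

theorem riccatiDenom_pos (γ x : ℝ) {k : ℝ} (hk : |k| < 1) : 0 < riccatiDenom γ k x := by
  obtain ⟨hk₁, hk₂⟩ := abs_lt.mp hk
  have h₁ : 0 < 1 + k := by linarith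
  have h₂ : 0 < 1 - k := by linarith
  have : riccatiDenom γ k x = ((1 + k) * exp (γ * x) + (1 - k) * exp (-(γ * x))) / 2 := by
    rw [riccatiDenom, cosh_eq, sinh_eq]; ring
  rw [this]; positivity

theorem riccatiSol_zero (γ k : ℝ) : riccatiSol γ k 0 = 0 := by
  simp [riccatiSol]

theorem riccatiDenom_zero (γ k : ℝ) : riccatiDenom γ k 0 = 1 := by
  simp [riccatiDenom]

theorem hasDerivAt_riccatiSol {γ k x : ℝ} (hγ : γ ≠ 0) (hD : riccatiDenom γ k x ≠ 0) :
    HasDerivAt (riccatiSol γ k) (1 / riccatiDenom γ k x ^ 2) x := by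
  have hlin : HasDerivAt (fun x => γ * x) γ x := by
    simpa using (hasDerivAt_id x).const_mul γ
  have hD' : HasDerivAt (fun x => γ * riccatiDenom γ k x)
      (γ * (sinh (γ * x) * γ + k * (cosh (γ * x) * γ))) x :=
    (hlin.cosh.add (hlin.sinh.const_mul k)).const_mul γ
  refine (hlin.sinh.div hD' (mul_ne_zero hγ hD)).congr_deriv ?_
  simp only [riccatiDenom] at hD ⊢
  field_simp
  linear_combination cosh_sq_sub_sinh_sq (γ * x)

theorem riccatiSol_riccati {γ k x : ℝ} (hγ : γ ≠ 0) (hD : riccatiDenom γ k x ≠ 0) :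
    1 - 2 * γ * k * riccatiSol γ k x - γ ^ 2 * (1 - k ^ 2) * riccatiSol γ k x ^ 2
      = 1 / riccatiDenom γ k x ^ 2 := by
  rw [riccatiSol]
  simp only [riccatiDenom] at hD ⊢
  field_simp
  linear_combination cosh_sq_sub_sinh_sq (γ * x)

noncomputable def psi (α σ γ x : ℝ) : ℝ :=
  -α / σ ^ 2 + (2 * γ / σ ^ 2) * (sinh (γ * x) + (α / (2 * γ)) * cosh (γ * x)) /
    (cosh (γ * x) + (α / (2 * γ)) * sinh (γ * x))

theorem psi_eq_riccatiSol {σ γ k x : ℝ} (hσ : σ ≠ 0) (hγ : γ ≠ 0)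
    (hγσ : σ ^ 2 = 2 * γ ^ 2 * (1 - k ^ 2)) (hD : riccatiDenom γ k x ≠ 0) :
    psi (2 * γ * k) σ γ x = riccatiSol γ k x := by
  have hk : 2 * γ * k / (2 * γ) = k := by field_simp
  rw [psi, riccatiSol, hk]
  rw [riccatiDenom] at hD ⊢
  field_simp
  linear_combination -sinh (γ * x) * hγσ

theorem psi_riccati {α σ γ : ℝ} (hσ : σ ≠ 0) (hγ : γ ≠ 0)
    (hγσ : (2 * γ) ^ 2 = 2 * σ ^ 2 + α ^ 2) :
    psi α σ γ 0 = 0 ∧ HasDerivAt (psi α σ γ) 1 0 ∧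
      ∀ x, HasDerivAt (psi α σ γ)
        (1 - α * psi α σ γ x - σ ^ 2 / 2 * psi α σ γ x ^ 2) x := by
  obtain ⟨k, rfl⟩ : ∃ k, α = 2 * γ * k := ⟨α / (2 * γ), by field_simp⟩
  have hσk : σ ^ 2 = 2 * γ ^ 2 * (1 - k ^ 2) := by linear_combination -hγσ / 2
  have hD (x : ℝ) : riccatiDenom γ k x ≠ 0 := by
    refine (riccatiDenom_pos γ x ?_).ne'
    rw [← sq_lt_one_iff_abs_lt_one]
    nlinarith [sq_pos_of_ne_zero hσ]
  have hψ : psi (2 * γ * k) σ γ = riccatiSol γ k :=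
    funext fun x => psi_eq_riccatiSol hσ hγ hσk (hD x)
  refine ⟨by simpa [hψ] using riccatiSol_zero γ k, ?_, fun x => ?_⟩
  · simpa [hψ, riccatiDenom_zero] using hasDerivAt_riccatiSol hγ (hD 0)
  · rw [hψ, hσk]
    convert hasDerivAt_riccatiSol hγ (hD x) using 1
    rw [← riccatiSol_riccati hγ (hD x)]
    ring

end CIR

theorem cir_riccati_general (α σ : ℝ) (hσ : 0 < σ) :
    letI γ : ℝ := (1 / 2) * Real.sqrt (2 * σ ^ 2 + α ^ 2)
    letI ψ : ℝ → ℝ := fun x =>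
      -α / σ ^ 2 + (2 * γ / σ ^ 2) *
        (Real.sinh (γ * x) + (α / (2 * γ)) * Real.cosh (γ * x)) /
        (Real.cosh (γ * x) + (α / (2 * γ)) * Real.sinh (γ * x))
    ψ 0 = 0 ∧ HasDerivAt ψ 1 0 ∧
      ∀ x : ℝ, 0 ≤ x →
        HasDerivAt ψ (1 - α * ψ x - σ ^ 2 / 2 * (ψ x) ^ 2) x := by
  have hs : 0 ≤ 2 * σ ^ 2 + α ^ 2 := by positivity
  obtain ⟨h₀, h₁, h⟩ := CIR.psi_riccati (α := α) (γ := (1 / 2) * √(2 * σ ^ 2 + α ^ 2)) hσ.ne'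
    (by positivity) (by linear_combination Real.sq_sqrt hs)
  exact ⟨h₀, h₁, fun x _ => h x⟩

/-- CIR Riccati function: with `γ = (1/2)√(2σ²+α²)` and
`ψ x = -α/σ² + (2γ/σ²)(sinh(γx) + (α/2γ)cosh(γx))/(cosh(γx) + (α/2γ)sinh(γx))`,
one has `ψ 0 = 0`, `ψ' 0 = 1`, and `ψ' x = 1 - α ψ x - (σ²/2) (ψ x)²` for `x ≥ 0`. -/
theorem cir_riccati (α σ : ℝ) (hα : 0 < α) (hσ : 0 < σ) :
    letI γ : ℝ := (1 / 2) * Real.sqrt (2 * σ ^ 2 + α ^ 2)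
    letI ψ : ℝ → ℝ := fun x =>
      -α / σ ^ 2 + (2 * γ / σ ^ 2) *
        (Real.sinh (γ * x) + (α / (2 * γ)) * Real.cosh (γ * x)) /
        (Real.cosh (γ * x) + (α / (2 * γ)) * Real.sinh (γ * x))
    ψ 0 = 0 ∧ HasDerivAt ψ 1 0 ∧
      ∀ x : ℝ, 0 ≤ x →
        HasDerivAt ψ (1 - α * ψ x - σ ^ 2 / 2 * (ψ x) ^ 2) x :=
  cir_riccati_general α σ hσ
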